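/- Suppose the UCB policy is run with a parameter α satisfying ξη(1−η) ≤ α < ξ(1−η) and α > 2. Let A(n) = ⌈(2 β^{1/ξ} / Δ_min)^{1/(1−η)} · n^{α/(ξ(1−η))}⌉. Then for every sub-optimal arm i ≠ i*, every integer n ≥ 1 and every real x ≥ 1, P( T_i(n) ≥ (3 + A(n)) x ) ≤ (2/(α−1)) · ((1 + A(n)) x)^{1−α}. -/

import Mathlib

open MeasureTheory ProbabilityTheory Finset

noncomputable section

/-- Empirical average `X̄_{i,n} = (1/n) ∑_{t=1}^n X_{i,t}` of the first `n` rewards of arm `i`. -/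
def empAvg {Ω : Type*} {K : ℕ} (X : Fin K → ℕ → Ω → ℝ) (i : Fin K) (n : ℕ) (ω : Ω) : ℝ :=
  (∑ t ∈ Finset.Icc 1 n, X i t ω) / n

/-- Bonus term `B_{t,s} = β^{1/ξ} t^{α/ξ} / s^{1-η}`. -/
def bonus (β ξ α η : ℝ) (t s : ℕ) : ℝ :=
  β ^ (1 / ξ) * (t : ℝ) ^ (α / ξ) / (s : ℝ) ^ (1 - η)

/-- Upper confidence index `U_{i,s,t} = X̄_{i,s} + B_{t,s}`. -/
def ucbIdx {Ω : Type*} {K : ℕ} (X : Fin K → ℕ → Ω → ℝ) (β ξ α η : ℝ)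
    (i : Fin K) (s t : ℕ) (ω : Ω) : ℝ :=
  empAvg X i s ω + bonus β ξ α η t s

/-- `T_i(t) = ∑_{l=1}^t 1{I_l = i}`, the number of plays of arm `i` up to (and including)
time `t`. -/
def playCount {Ω : Type*} {K : ℕ} (I : ℕ → Ω → Fin K) (i : Fin K) (t : ℕ) (ω : Ω) : ℕ :=
  ((Finset.Icc 1 t).filter fun l => I l ω = i).card

/-- The `EReal`-valued index `X̄_{i,T_i(t)} + B_{t,T_i(t)}` used by the UCB policy at the end
of time `t`, with the convention that the index is `+∞` when `T_i(t) = 0`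
(i.e. `B_{t,0} = +∞`). -/
def ucbIdxE {Ω : Type*} {K : ℕ} (X : Fin K → ℕ → Ω → ℝ) (β ξ α η : ℝ)
    (I : ℕ → Ω → Fin K) (j : Fin K) (t : ℕ) (ω : Ω) : EReal :=
  if playCount I j t ω = 0 then ⊤
  else ((ucbIdx X β ξ α η j (playCount I j t ω) t ω : ℝ) : EReal)

/-! If arm `i` is played at least `m + 2` times by time `n`, where `m = ⌈(1 + A(n)) x⌉`, look
at the time `t ≤ n` of its `(m + 2)`-nd play. Since `m ≥ A(n)`, the bonus of arm `i` then is at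
most `Δ/2`, and the optimal arm, played some `s ≥ 1` times before `t`, lost the comparison of
indices. Hence either the empirical mean of arm `i` after `m + 1` plays exceeds `μ_i + Δ/2`, or
the empirical mean of the optimal arm after `s` plays lies below `μ* - B_{m+s,s}`. The
concentration assumption makes these events have probability at most `s^{-α}` for `s ∈ (m, n]`
and `(m + s)^{-α}` respectively, and each of the two tail sums is at most `m^{1-α}/(α-1)`. -/

/-- The deviation level `z = β^{1/ξ} y^{α/ξ}` behind the bonus is the one at which the tail
bound `β / z^ξ` equals `y^{-α}`. -/
lemma div_rpow_le_rpow_neg {β ξ α y z : ℝ} (hβ : 0 < β) (hξ : 0 < ξ) (hy : 0 < y)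
    (hz : β ^ (1 / ξ) * y ^ (α / ξ) ≤ z) : β / z ^ ξ ≤ y ^ (-α) := by
  have hpow : (β ^ (1 / ξ) * y ^ (α / ξ)) ^ ξ = β * y ^ α := by
    rw [Real.mul_rpow (by positivity) (by positivity), ← Real.rpow_mul hβ.le,
      ← Real.rpow_mul hy.le, one_div_mul_cancel hξ.ne', Real.rpow_one, div_mul_cancel₀ _ hξ.ne']
  calc β / z ^ ξ ≤ β / (β * y ^ α) := by
        gcongr
        rw [← hpow]
        gcongr
    _ = y ^ (-α) := by
        rw [Real.rpow_neg hy.le]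
        field_simp

lemma sum_Ioc_rpow_neg_le {α : ℝ} (hα : 1 < α) {m : ℕ} (hm : 0 < m) (N : ℕ) :
    ∑ s ∈ Ioc m N, (s : ℝ) ^ (-α) ≤ (m : ℝ) ^ (1 - α) / (α - 1) := by
  have hα1 : 0 < α - 1 := by linarith
  rcases le_total N m with hNm | hmN
  · rw [Ioc_eq_empty_of_le hNm, sum_empty]
    positivity
  have hm' : (0 : ℝ) < m := by exact_mod_cast hm
  have hanti : AntitoneOn (fun x : ℝ => x ^ (-α)) (Set.Icc (m : ℝ) N) :=
    (Real.antitoneOn_rpow_Ioi_of_exponent_nonpos (by linarith)).mono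
      fun x hx => hm'.trans_le hx.1
  have hzero : (0 : ℝ) ∉ Set.uIcc (m : ℝ) N := by
    rw [Set.uIcc_of_le (by exact_mod_cast hmN)]
    exact fun h => hm'.not_ge h.1
  calc ∑ s ∈ Ioc m N, (s : ℝ) ^ (-α)
      = ∑ j ∈ Ico m N, ((j + 1 : ℕ) : ℝ) ^ (-α) := by
        rw [← Ico_add_one_add_one_eq_Ioc, ← sum_Ico_add']
    _ ≤ ∫ x in (m : ℝ)..N, x ^ (-α) := hanti.sum_le_integral_Ico hmN
    _ = ((m : ℝ) ^ (1 - α) - (N : ℝ) ^ (1 - α)) / (α - 1) := by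
        rw [integral_rpow (Or.inr ⟨by linarith, hzero⟩), show -α + 1 = 1 - α by ring,
          ← neg_sub α 1, div_neg, ← neg_div, neg_sub]
    _ ≤ (m : ℝ) ^ (1 - α) / (α - 1) := by
        gcongr
        exact sub_le_self _ (by positivity)

lemma sum_Ioc_zero_add_rpow_neg_le {α : ℝ} (hα : 1 < α) {m : ℕ} (hm : 0 < m) (N : ℕ) :
    ∑ s ∈ Ioc 0 N, ((m + s : ℕ) : ℝ) ^ (-α) ≤ (m : ℝ) ^ (1 - α) / (α - 1) := by
  have hshift := sum_map (Ioc 0 N) (addLeftEmbedding m) fun s : ℕ => (s : ℝ) ^ (-α)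
  rw [map_add_left_Ioc, add_zero] at hshift
  exact hshift ▸ sum_Ioc_rpow_neg_le hα hm (m + N)

lemma ceil_mul_add_two_le {a x : ℝ} {T : ℕ} (ha : 0 ≤ a) (hx : 1 ≤ x) (h : (a + 2) * x ≤ T) :
    ⌈a * x⌉₊ + 2 ≤ T := by
  have h2 : a * x + ((2 : ℕ) : ℝ) ≤ T := by push_cast; nlinarith
  rw [← Nat.ceil_add_natCast (mul_nonneg ha (by linarith)) 2]
  exact Nat.ceil_le.mpr h2

lemma measure_biUnion_le_ofReal_sum {Ω ι : Type*} [MeasurableSpace Ω] (P : Measure Ω)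
    (S : Finset ι) {E : ι → Set Ω} {g : ι → ℝ} (hg : ∀ s ∈ S, 0 ≤ g s)
    (hE : ∀ s ∈ S, P (E s) ≤ ENNReal.ofReal (g s)) :
    P (⋃ s ∈ S, E s) ≤ ENNReal.ofReal (∑ s ∈ S, g s) := by
  rw [ENNReal.ofReal_sum_of_nonneg hg]
  exact (measure_biUnion_finset_le S E).trans (sum_le_sum hE)

section Tail

variable {Ω : Type*} [MeasurableSpace Ω] (P : Measure Ω)

lemma measure_add_le_le_of_tail {f : Ω → ℝ} {c β ξ η ε : ℝ} {s : ℕ} (hs : 0 < s)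
    (hz : 1 ≤ (s : ℝ) ^ (1 - η) * ε)
    (htail : ∀ z : ℝ, 1 ≤ z →
      P {ω | (s : ℝ) * f ω - s * c ≥ (s : ℝ) ^ η * z} ≤ ENNReal.ofReal (β / z ^ ξ)) :
    P {ω | c + ε ≤ f ω} ≤ ENNReal.ofReal (β / ((s : ℝ) ^ (1 - η) * ε) ^ ξ) := by
  have hs' : (0 : ℝ) < s := by exact_mod_cast hs
  convert htail _ hz using 2
  ext ω
  rw [Set.mem_ofPred_eq, Set.mem_ofPred_eq, ← mul_assoc, ← Real.rpow_add hs', add_sub_cancel,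
    Real.rpow_one, ge_iff_le, ← mul_sub, mul_le_mul_iff_right₀ hs', le_sub_iff_add_le']

/-- The concentration assumption on the empirical means `f n` of a reward sequence with limit
mean `c`. -/
def HasPolyTails (f : ℕ → Ω → ℝ) (c β ξ η : ℝ) : Prop :=
  ∀ n : ℕ, 1 ≤ n → ∀ z : ℝ, 1 ≤ z →
    P {ω | (n : ℝ) * f n ω - n * c ≥ (n : ℝ) ^ η * z} ≤ ENNReal.ofReal (β / z ^ ξ) ∧
    P {ω | (n : ℝ) * f n ω - n * c ≤ -((n : ℝ) ^ η * z)} ≤ ENNReal.ofReal (β / z ^ ξ)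

variable {P} {f : ℕ → Ω → ℝ} {c β ξ η α ε y : ℝ} {s : ℕ}

lemma HasPolyTails.neg (h : HasPolyTails P f c β ξ η) :
    HasPolyTails P (fun n ω => -f n ω) (-c) β ξ η := by
  intro n hn z hz
  obtain ⟨hup, hlow⟩ := h n hn z hz
  constructor
  · convert hlow using 2
    ext ω
    simp only [Set.mem_ofPred_eq]
    constructor <;> intro hω <;> linarith
  · convert hup using 2
    ext ω
    simp only [Set.mem_ofPred_eq]
    constructor <;> intro hω <;> linarith

lemma HasPolyTails.measure_add_le_le (h : HasPolyTails P f c β ξ η) (hβ : 1 ≤ β) (hξ : 0 < ξ)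
    (hα : 0 ≤ α) (hs : 0 < s) (hy : 1 ≤ y)
    (hε : β ^ (1 / ξ) * y ^ (α / ξ) ≤ (s : ℝ) ^ (1 - η) * ε) :
    P {ω | c + ε ≤ f s ω} ≤ ENNReal.ofReal (y ^ (-α)) := by
  have hz : 1 ≤ β ^ (1 / ξ) * y ^ (α / ξ) :=
    one_le_mul_of_one_le_of_one_le (Real.one_le_rpow hβ (by positivity))
      (Real.one_le_rpow hy (by positivity))
  exact (measure_add_le_le_of_tail P hs (hz.trans hε) fun z hz => (h s hs z hz).1).trans
    (ENNReal.ofReal_le_ofReal (div_rpow_le_rpow_neg (by linarith) hξ (by linarith) hε))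

lemma HasPolyTails.measure_le_sub_le (h : HasPolyTails P f c β ξ η) (hβ : 1 ≤ β) (hξ : 0 < ξ)
    (hα : 0 ≤ α) (hs : 0 < s) (hy : 1 ≤ y)
    (hε : β ^ (1 / ξ) * y ^ (α / ξ) ≤ (s : ℝ) ^ (1 - η) * ε) :
    P {ω | f s ω ≤ c - ε} ≤ ENNReal.ofReal (y ^ (-α)) := by
  convert h.neg.measure_add_le_le hβ hξ hα hs hy hε using 2
  ext ω
  simp only [Set.mem_ofPred_eq]
  constructor <;> intro hω <;> linarith

end Tail

section PlayCount

variable {Ω : Type*} {K : ℕ} (I : ℕ → Ω → Fin K) (i j : Fin K) (ω : Ω)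

lemma playCount_zero : playCount I i 0 ω = 0 := by
  simp [playCount]

lemma playCount_succ (t : ℕ) :
    playCount I i (t + 1) ω = playCount I i t ω + if I (t + 1) ω = i then 1 else 0 := by
  simp only [playCount, card_filter]
  exact sum_Icc_succ_top (Nat.le_add_left 1 t) _

lemma exists_play_of_lt_playCount {k n : ℕ} (hk : k < playCount I i n ω) :
    ∃ t, 1 ≤ t ∧ t ≤ n ∧ I t ω = i ∧ playCount I i (t - 1) ω = k := by
  induction n with
  | zero => simp [playCount_zero] at hk
  | succ n ih =>
    rw [playCount_succ] at hk
    by_cases hkn : k < playCount I i n ω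
    · obtain ⟨t, ht1, htn, hIt, hTt⟩ := ih hkn
      exact ⟨t, ht1, htn.trans n.le_succ, hIt, hTt⟩
    · by_cases hI : I (n + 1) ω = i
      · rw [if_pos hI] at hk
        exact ⟨n + 1, Nat.le_add_left 1 n, le_rfl, hI, by simp only [Nat.add_sub_cancel]; omega⟩
      · rw [if_neg hI] at hk
        omega

lemma playCount_add_playCount_le (hij : i ≠ j) (t : ℕ) :
    playCount I i t ω + playCount I j t ω ≤ t := by
  have hsub : (Icc 1 t).filter (fun l => I l ω = j) ⊆ (Icc 1 t).filter (fun l => ¬I l ω = i) :=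
    monotone_filter_right _ fun l _ hl => hl ▸ hij.symm
  calc playCount I i t ω + playCount I j t ω
      ≤ ((Icc 1 t).filter fun l => I l ω = i).card
        + ((Icc 1 t).filter fun l => ¬I l ω = i).card :=
        Nat.add_le_add_left (card_le_card hsub) _
    _ = t := by rw [card_filter_add_card_filter_not, Nat.card_Icc, Nat.add_sub_cancel]

end PlayCount

lemma ucbIdx_le_of_ucbIdxE_le {Ω : Type*} {K : ℕ} {X : Fin K → ℕ → Ω → ℝ} {β ξ α η : ℝ}
    {I : ℕ → Ω → Fin K} {i j : Fin K} {t : ℕ} {ω : Ω}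
    (h : ucbIdxE X β ξ α η I j t ω ≤ ucbIdxE X β ξ α η I i t ω) (hi : playCount I i t ω ≠ 0) :
    playCount I j t ω ≠ 0 ∧
      ucbIdx X β ξ α η j (playCount I j t ω) t ω ≤ ucbIdx X β ξ α η i (playCount I i t ω) t ω := by
  by_cases hj : playCount I j t ω = 0
  · simp [ucbIdxE, hi, hj] at h
  · simp only [ucbIdxE, if_neg hi, if_neg hj, EReal.coe_le_coe_iff] at h
    exact ⟨hj, h⟩

section Bonus

variable {β ξ α η : ℝ}

lemma bonus_mono_left (hβ : 0 ≤ β) (hαξ : 0 ≤ α / ξ) (s : ℕ) {t t' : ℕ} (ht : t ≤ t') :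
    bonus β ξ α η t s ≤ bonus β ξ α η t' s := by
  unfold bonus
  gcongr

lemma rpow_mul_bonus {s : ℕ} (hs : 0 < s) (t : ℕ) :
    (s : ℝ) ^ (1 - η) * bonus β ξ α η t s = β ^ (1 / ξ) * (t : ℝ) ^ (α / ξ) := by
  have : (s : ℝ) ^ (1 - η) ≠ 0 := by positivity
  rw [bonus, mul_div_cancel₀ _ this]

lemma bonus_le_half_of_le {Δ : ℝ} (hβ : 0 ≤ β) (hΔ : 0 < Δ) (hη : η < 1) {n s : ℕ} (hs : 0 < s)
    (hsn : (2 * β ^ (1 / ξ) / Δ) ^ (1 / (1 - η)) * (n : ℝ) ^ (α / (ξ * (1 - η))) ≤ s) :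
    bonus β ξ α η n s ≤ Δ / 2 := by
  have h1η : 0 < 1 - η := by linarith
  have hpow : 2 * β ^ (1 / ξ) / Δ * (n : ℝ) ^ (α / ξ) ≤ (s : ℝ) ^ (1 - η) := by
    calc 2 * β ^ (1 / ξ) / Δ * (n : ℝ) ^ (α / ξ)
        = ((2 * β ^ (1 / ξ) / Δ) ^ (1 / (1 - η)) * (n : ℝ) ^ (α / (ξ * (1 - η)))) ^ (1 - η) := by
          rw [Real.mul_rpow (by positivity) (by positivity), ← Real.rpow_mul (by positivity),
            ← Real.rpow_mul (Nat.cast_nonneg n), one_div_mul_cancel h1η.ne', Real.rpow_one,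
            div_mul_eq_div_div, div_mul_cancel₀ _ h1η.ne']
      _ ≤ (s : ℝ) ^ (1 - η) := by gcongr
  rw [bonus, div_le_iff₀ (by positivity)]
  calc β ^ (1 / ξ) * (n : ℝ) ^ (α / ξ) = Δ / 2 * (2 * β ^ (1 / ξ) / Δ * (n : ℝ) ^ (α / ξ)) := by
        field_simp
    _ ≤ Δ / 2 * (s : ℝ) ^ (1 - η) := by gcongr

end Bonus

theorem setOf_add_two_le_playCount_subset {Ω : Type*} {K : ℕ} {X : Fin K → ℕ → Ω → ℝ}
    {β ξ α η : ℝ} {I : ℕ → Ω → Fin K}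
    (hPolicy : ∀ t : ℕ, 1 ≤ t → ∀ ω : Ω, ∀ j : Fin K,
      ucbIdxE X β ξ α η I j (t - 1) ω ≤ ucbIdxE X β ξ α η I (I t ω) (t - 1) ω)
    (hβ : 0 ≤ β) (hαξ : 0 ≤ α / ξ) {μ : Fin K → ℝ} {i istar : Fin K} (hi : i ≠ istar)
    {Δ : ℝ} (hgap : Δ ≤ μ istar - μ i) {m n : ℕ}
    (hbonus : ∀ s, m < s → bonus β ξ α η n s ≤ Δ / 2) :
    {ω | m + 2 ≤ playCount I i n ω} ⊆
      (⋃ s ∈ Ioc m n, {ω | μ i + Δ / 2 ≤ empAvg X i s ω}) ∪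
        ⋃ s ∈ Ioc 0 n, {ω | empAvg X istar s ω ≤ μ istar - bonus β ξ α η (m + s) s} := by
  intro ω hω
  obtain ⟨t, ht1, htn, hIt, hTi⟩ := exists_play_of_lt_playCount I i ω (k := m + 1) hω
  have hpol := hPolicy t ht1 ω istar
  rw [hIt] at hpol
  obtain ⟨hs0, hU⟩ := ucbIdx_le_of_ucbIdxE_le hpol (by omega)
  have hcount := playCount_add_playCount_le I i istar ω hi (t - 1)
  set s := playCount I istar (t - 1) ω
  rw [hTi] at hU hcount
  by_cases hlow : empAvg X istar s ω ≤ μ istar - bonus β ξ α η (m + s) s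
  · exact Or.inr (Set.mem_biUnion (x := s) (mem_Ioc.mpr ⟨by omega, by omega⟩) hlow)
  · refine Or.inl (Set.mem_biUnion (x := m + 1) (mem_Ioc.mpr ⟨by omega, by omega⟩) ?_)
    have hB_star := bonus_mono_left (η := η) hβ hαξ s (show m + s ≤ t - 1 by omega)
    have hB_i := bonus_mono_left (η := η) hβ hαξ (m + 1) (show t - 1 ≤ n by omega)
    have hB_half := hbonus (m + 1) (by omega)
    rw [ucbIdx, ucbIdx] at hU
    show μ i + Δ / 2 ≤ empAvg X i (m + 1) ω
    linarith [not_le.mp hlow]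

theorem measure_add_two_le_playCount_le {Ω : Type*} [MeasurableSpace Ω] (P : Measure Ω) {K : ℕ}
    {X : Fin K → ℕ → Ω → ℝ} {β ξ α η : ℝ} {I : ℕ → Ω → Fin K}
    (hPolicy : ∀ t : ℕ, 1 ≤ t → ∀ ω : Ω, ∀ j : Fin K,
      ucbIdxE X β ξ α η I j (t - 1) ω ≤ ucbIdxE X β ξ α η I (I t ω) (t - 1) ω)
    {μ : Fin K → ℝ} (hconc : ∀ j, HasPolyTails P (empAvg X j) (μ j) β ξ η)
    (hβ : 1 ≤ β) (hξ : 0 < ξ) (hα : 1 < α) {i istar : Fin K} (hi : i ≠ istar)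
    {Δ : ℝ} (hgap : Δ ≤ μ istar - μ i) {m n : ℕ} (hm : 0 < m)
    (hbonus : ∀ s, m < s → bonus β ξ α η n s ≤ Δ / 2) :
    P {ω | m + 2 ≤ playCount I i n ω} ≤ ENNReal.ofReal (2 / (α - 1) * (m : ℝ) ^ (1 - α)) := by
  have hEb : ∀ s ∈ Ioc m n,
      P {ω | μ i + Δ / 2 ≤ empAvg X i s ω} ≤ ENNReal.ofReal ((s : ℝ) ^ (-α)) := by
    intro s hs
    rw [mem_Ioc] at hs
    have hs0 : 0 < s := by omega
    have hε : β ^ (1 / ξ) * (n : ℝ) ^ (α / ξ) ≤ (s : ℝ) ^ (1 - η) * (Δ / 2) :=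
      (rpow_mul_bonus hs0 n).symm.le.trans (by gcongr; exact hbonus s hs.1)
    calc _ ≤ ENNReal.ofReal ((n : ℝ) ^ (-α)) :=
          (hconc i).measure_add_le_le hβ hξ (by linarith) hs0
            (by exact_mod_cast (show 1 ≤ n by omega)) hε
      _ ≤ _ := ENNReal.ofReal_le_ofReal <| Real.rpow_le_rpow_of_nonpos (by positivity)
          (by exact_mod_cast hs.2) (by linarith)
  have hEa : ∀ s ∈ Ioc 0 n, P {ω | empAvg X istar s ω ≤ μ istar - bonus β ξ α η (m + s) s}
      ≤ ENNReal.ofReal (((m + s : ℕ) : ℝ) ^ (-α)) := fun s hs =>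
    (hconc istar).measure_le_sub_le hβ hξ (by linarith) (mem_Ioc.mp hs).1
      (by exact_mod_cast (show 1 ≤ m + s by omega)) (rpow_mul_bonus (mem_Ioc.mp hs).1 _).ge
  have hαm : 0 ≤ (m : ℝ) ^ (1 - α) / (α - 1) := div_nonneg (by positivity) (by linarith)
  calc P {ω | m + 2 ≤ playCount I i n ω}
      ≤ P ((⋃ s ∈ Ioc m n, {ω | μ i + Δ / 2 ≤ empAvg X i s ω}) ∪
          ⋃ s ∈ Ioc 0 n, {ω | empAvg X istar s ω ≤ μ istar - bonus β ξ α η (m + s) s}) :=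
        measure_mono <| setOf_add_two_le_playCount_subset hPolicy (by linarith)
          (div_nonneg (by linarith) hξ.le) hi hgap hbonus
    _ ≤ ENNReal.ofReal (∑ s ∈ Ioc m n, (s : ℝ) ^ (-α))
        + ENNReal.ofReal (∑ s ∈ Ioc 0 n, ((m + s : ℕ) : ℝ) ^ (-α)) :=
        (measure_union_le _ _).trans <| add_le_add
          (measure_biUnion_le_ofReal_sum P _ (fun _ _ => by positivity) hEb)
          (measure_biUnion_le_ofReal_sum P _ (fun _ _ => by positivity) hEa)
    _ ≤ ENNReal.ofReal ((m : ℝ) ^ (1 - α) / (α - 1))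
        + ENNReal.ofReal ((m : ℝ) ^ (1 - α) / (α - 1)) :=
        add_le_add (ENNReal.ofReal_le_ofReal (sum_Ioc_rpow_neg_le hα hm n))
          (ENNReal.ofReal_le_ofReal (sum_Ioc_zero_add_rpow_neg_le hα hm n))
    _ = ENNReal.ofReal (2 / (α - 1) * (m : ℝ) ^ (1 - α)) := by
        rw [← ENNReal.ofReal_add hαm hαm]
        ring_nf

theorem ucb_playCount_tail_general
    {Ω : Type*} [MeasurableSpace Ω] (P : Measure Ω)
    (K : ℕ)
    (X : Fin K → ℕ → Ω → ℝ)
    (μ : Fin K → ℝ)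
    (β ξ η α : ℝ) (hβ : 1 < β) (hξ : 0 < ξ) (hη' : η < 1)
    (hα2 : 2 < α)
    (hconc : ∀ i : Fin K, ∀ n : ℕ, 1 ≤ n → ∀ z : ℝ, 1 ≤ z →
      P {ω | (n : ℝ) * empAvg X i n ω - n * μ i ≥ (n : ℝ) ^ η * z}
        ≤ ENNReal.ofReal (β / z ^ ξ) ∧
      P {ω | (n : ℝ) * empAvg X i n ω - n * μ i ≤ -((n : ℝ) ^ η * z)}
        ≤ ENNReal.ofReal (β / z ^ ξ))
    (istar : Fin K)
    (I : ℕ → Ω → Fin K)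
    (hPolicy : ∀ t : ℕ, 1 ≤ t → ∀ ω : Ω, ∀ j : Fin K,
      ucbIdxE X β ξ α η I j (t - 1) ω ≤ ucbIdxE X β ξ α η I (I t ω) (t - 1) ω)
    (Δmin : ℝ)
    (hΔmin_le : ∀ j, j ≠ istar → Δmin ≤ μ istar - μ j)
    (hΔβ : 1 < 2 * β ^ (1 / ξ) / Δmin)
    (A : ℕ → ℕ)
    (hA : ∀ n : ℕ,
      A n = ⌈(2 * β ^ (1 / ξ) / Δmin) ^ (1 / (1 - η)) * (n : ℝ) ^ (α / (ξ * (1 - η)))⌉₊)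
    (i : Fin K) (hi : i ≠ istar) (n : ℕ) (x : ℝ) (hx : 1 ≤ x) :
    P {ω | ((3 + A n : ℕ) : ℝ) * x ≤ (playCount I i n ω : ℝ)}
      ≤ ENNReal.ofReal (2 / (α - 1) * (((1 + A n : ℕ) : ℝ) * x) ^ ((1 : ℝ) - α)) := by
  have hΔ : 0 < Δmin := (div_pos_iff_of_pos_left (by positivity)).mp (one_pos.trans hΔβ)
  set u : ℝ := ((1 + A n : ℕ) : ℝ) * x with hu
  have hAu : 1 + (A n : ℝ) ≤ u := by
    rw [hu]
    push_cast
    exact le_mul_of_one_le_right (by positivity) hx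
  have hu0 : 0 < u := by positivity
  have hbonus : ∀ s, ⌈u⌉₊ < s → bonus β ξ α η n s ≤ Δmin / 2 := fun s hs =>
    bonus_le_half_of_le (by linarith) hΔ hη' (by omega) <| calc
      _ ≤ (A n : ℝ) := hA n ▸ Nat.le_ceil _
      _ ≤ ⌈u⌉₊ := (by linarith : (A n : ℝ) ≤ u).trans (Nat.le_ceil u)
      _ ≤ s := by exact_mod_cast hs.le
  calc P {ω | ((3 + A n : ℕ) : ℝ) * x ≤ (playCount I i n ω : ℝ)}
      ≤ P {ω | ⌈u⌉₊ + 2 ≤ playCount I i n ω} :=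
        measure_mono fun ω hω => ceil_mul_add_two_le (by positivity) hx <| by
          rw [Set.mem_ofPred_eq] at hω
          push_cast at hω ⊢
          linarith
    _ ≤ ENNReal.ofReal (2 / (α - 1) * (⌈u⌉₊ : ℝ) ^ (1 - α)) :=
        measure_add_two_le_playCount_le P hPolicy hconc hβ.le hξ (by linarith) hi (hΔmin_le i hi)
          (Nat.ceil_pos.mpr hu0) hbonus
    _ ≤ _ := ENNReal.ofReal_le_ofReal <| mul_le_mul_of_nonneg_left
        (Real.rpow_le_rpow_of_nonpos hu0 (Nat.le_ceil u) (by linarith))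
        (div_nonneg zero_le_two (by linarith))

/-- Tail bound on the number of plays of a sub-optimal arm:
`P(T_i(n) ≥ (3 + A(n))x) ≤ (2/(α−1)) ((1 + A(n))x)^{1−α}`. -/
theorem ucb_playCount_tail
    {Ω : Type*} [MeasurableSpace Ω] (P : Measure Ω) [IsProbabilityMeasure P]
    (K : ℕ) (hK : 2 ≤ K) (R : ℝ) (hR : 0 < R)
    (X : Fin K → ℕ → Ω → ℝ)
    (hXmeas : ∀ i t, Measurable (X i t))
    (hXbdd : ∀ i t ω, |X i t ω| ≤ R)
    (μ : Fin K → ℝ)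
    (hconv : ∀ i, Filter.Tendsto (fun n => ∫ ω, empAvg X i n ω ∂P)
      Filter.atTop (nhds (μ i)))
    (β ξ η α : ℝ) (hβ : 1 < β) (hξ : 0 < ξ) (hη : 1 / 2 ≤ η) (hη' : η < 1)
    (hα2 : 2 < α) (hαlow : ξ * η * (1 - η) ≤ α) (hαhigh : α < ξ * (1 - η))
    (hconc : ∀ i : Fin K, ∀ n : ℕ, 1 ≤ n → ∀ z : ℝ, 1 ≤ z →
      P {ω | (n : ℝ) * empAvg X i n ω - n * μ i ≥ (n : ℝ) ^ η * z}
        ≤ ENNReal.ofReal (β / z ^ ξ) ∧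
      P {ω | (n : ℝ) * empAvg X i n ω - n * μ i ≤ -((n : ℝ) ^ η * z)}
        ≤ ENNReal.ofReal (β / z ^ ξ))
    (istar : Fin K) (hopt : ∀ j, j ≠ istar → μ j < μ istar)
    (I : ℕ → Ω → Fin K)
    (hImeas : ∀ t, Measurable (I t))
    (hPolicy : ∀ t : ℕ, 1 ≤ t → ∀ ω : Ω, ∀ j : Fin K,
      ucbIdxE X β ξ α η I j (t - 1) ω ≤ ucbIdxE X β ξ α η I (I t ω) (t - 1) ω)
    (Δmin : ℝ)
    (hΔmin_le : ∀ j, j ≠ istar → Δmin ≤ μ istar - μ j)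
    (hΔmin_ex : ∃ j, j ≠ istar ∧ Δmin = μ istar - μ j)
    (hΔβ : 1 < 2 * β ^ (1 / ξ) / Δmin)
    (A : ℕ → ℕ)
    (hA : ∀ n : ℕ,
      A n = ⌈(2 * β ^ (1 / ξ) / Δmin) ^ (1 / (1 - η)) * (n : ℝ) ^ (α / (ξ * (1 - η)))⌉₊)
    (i : Fin K) (hi : i ≠ istar) (n : ℕ) (hn : 1 ≤ n) (x : ℝ) (hx : 1 ≤ x) :
    P {ω | ((3 + A n : ℕ) : ℝ) * x ≤ (playCount I i n ω : ℝ)}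
      ≤ ENNReal.ofReal (2 / (α - 1) * (((1 + A n : ℕ) : ℝ) * x) ^ ((1 : ℝ) - α)) :=
  ucb_playCount_tail_general P K X μ β ξ η α hβ hξ hη' hα2 hconc istar I hPolicy Δmin hΔmin_le hΔβ A
    hA i hi n x hx
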